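/- Let φ(x) = log(1+e^x). For all real numbers C, D, Z, the matrix identity X_D · L · X_C = X_{D-φ(-Z)} · L · X_{-Z} · L · X_{C+φ(Z)} holds, where X_Y = [[0,-e^{Y/2}],[e^{-Y/2},0]] and L = [[0,1],[-1,-1]]. -/

import Mathlib

/-!
Multiplying `edgeX W` on the left, resp. right, by a diagonal matrix shifts its shear coordinate,
so both sides transform in the same way under `C ↦ C + c`, `D ↦ D + d`, and it suffices to take
`C = D = 0`. There `edgeX Y * Lturn` is upper triangular and the identity becomes two scalar
relations between the coordinates `-φ(-Z), -Z, φ(Z)` of the new path: they sum to `0`, since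
`φ(Z) - φ(-Z) = Z`, and `e^{-φ(-Z)} (1 + e^{-Z}) = 1`, since `e^{φ(x)} = 1 + e^x`.
-/

open Matrix

noncomputable def edgeX (Y : ℝ) : Matrix (Fin 2) (Fin 2) ℝ :=
  !![0, -Real.exp (Y/2); Real.exp (-Y/2), 0]

def Lturn : Matrix (Fin 2) (Fin 2) ℝ := !![0, 1; -1, -1]

noncomputable def phi (x : ℝ) : ℝ := Real.log (1 + Real.exp x)

open Real

theorem exp_phi (x : ℝ) : exp (phi x) = 1 + exp x :=
  exp_log (by positivity)

theorem phi_sub_phi_neg (x : ℝ) : phi x - phi (-x) = x := by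
  apply exp_injective
  rw [exp_sub, exp_phi, exp_phi, div_eq_iff (by positivity), mul_add, mul_one, ← exp_add,
    add_neg_cancel, exp_zero, add_comm]

theorem exp_neg_phi_neg_mul (x : ℝ) : exp (-phi (-x)) * (1 + exp (-x)) = 1 := by
  rw [exp_neg, exp_phi, inv_mul_cancel₀ (by positivity)]

theorem edgeX_add_left (Y W : ℝ) :
    edgeX (Y + W) = diagonal ![exp (Y / 2), exp (-Y / 2)] * edgeX W := by
  rw [edgeX, edgeX, diagonal_vec2, mul_fin_two]
  simp only [mul_zero, zero_mul, add_zero, zero_add, mul_neg, ← exp_add]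
  ring_nf

theorem edgeX_add_right (W Y : ℝ) :
    edgeX (W + Y) = edgeX W * diagonal ![exp (-Y / 2), exp (Y / 2)] := by
  rw [edgeX, edgeX, diagonal_vec2, mul_fin_two]
  simp only [mul_zero, zero_mul, add_zero, zero_add, neg_mul, ← exp_add]
  ring_nf

theorem edgeX_mul_Lturn (Y : ℝ) :
    edgeX Y * Lturn = !![exp (Y / 2), exp (Y / 2); 0, exp (-Y / 2)] := by
  rw [edgeX, Lturn, mul_fin_two]
  ring_nf

theorem edgeX_zero_mul_Lturn_mul_edgeX_zero {Y₁ Y₂ Y₃ : ℝ} (h_sum : Y₁ + Y₂ + Y₃ = 0)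
    (h_exp : exp Y₁ * (1 + exp Y₂) = 1) :
    edgeX 0 * Lturn * edgeX 0 = edgeX Y₁ * Lturn * edgeX Y₂ * Lturn * edgeX Y₃ := by
  rw [Matrix.mul_assoc (edgeX Y₁ * Lturn), edgeX_mul_Lturn, edgeX_mul_Lturn, edgeX_mul_Lturn,
    edgeX, edgeX, mul_fin_two, mul_fin_two, mul_fin_two, eq_neg_of_add_eq_zero_right h_sum]
  simp only [EmbeddingLike.apply_eq_iff_eq, vecCons_inj, and_true, mul_zero, zero_mul, add_zero,
    zero_add, zero_div, neg_zero, exp_zero, mul_one, neg_neg, mul_neg, neg_inj, add_mul, ← exp_add]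
  refine ⟨⟨?_, ?_⟩, ?_⟩
  · rw [← h_exp, mul_add, mul_one, ← exp_add, add_comm (exp Y₁)]
    ring_nf
  all_goals rw [eq_comm, exp_eq_one_iff]; ring

theorem flip_identity_L (C D Z : ℝ) :
    edgeX D * Lturn * edgeX C
      = edgeX (D - phi (-Z)) * Lturn * edgeX (-Z) * Lturn * edgeX (C + phi Z) := by
  have h_sum : -phi (-Z) + -Z + phi Z = 0 := by linarith [phi_sub_phi_neg Z]
  have h_flip := edgeX_zero_mul_Lturn_mul_edgeX_zero h_sum (exp_neg_phi_neg_mul Z)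
  calc edgeX D * Lturn * edgeX C
      = diagonal ![exp (D / 2), exp (-D / 2)] * (edgeX 0 * Lturn * edgeX 0)
          * diagonal ![exp (-C / 2), exp (C / 2)] := by
        conv_lhs => rw [← add_zero D, ← zero_add C, edgeX_add_left, edgeX_add_right]
        simp only [Matrix.mul_assoc]
    _ = edgeX (D - phi (-Z)) * Lturn * edgeX (-Z) * Lturn * edgeX (C + phi Z) := by
        rw [h_flip, sub_eq_add_neg, edgeX_add_left, add_comm C, edgeX_add_right]
        simp only [Matrix.mul_assoc]
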